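/- Let A = (a_x)_{x∈X} be a finite-outcome POVM on a finite-dimensional complex Hilbert space H. Then A is intersubjective (i.e., every POVM B = (b_{x,x'}) on X×X with both marginals equal to A satisfies ∑_x b_{x,x} = 1) if and only if for all x ≠ x' in X, range(a_x) ∩ range(a_{x'}) = {0}. -/

import Mathlib

/-!
If `v ≠ 0` lies in `range a_x ∩ range a_{x'}`, the Cauchy–Schwarz inequality for the forms
`a_x`, `a_{x'}` puts `c = ε v v*` below both of them for small `ε > 0`. Moving `c` from the
cells `(x, x)`, `(x', x')` of the diagonal joint POVM `b_{y,y'} = δ_{y y'} a_y` to the cells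
`(x, x')`, `(x', x)` gives a joint POVM whose diagonal sums to `1 - 2c ≠ 1`.

Conversely, in any joint POVM each `b_{x,x'}` lies below both `a_x` and `a_{x'}` in the Loewner
order. For `0 ≤ b ≤ a` the kernel of `a` lies in that of `b`, so the range of `b` (the orthogonal
complement of its kernel) lies in that of `a`; hence `b_{x,x'} = 0` for `x ≠ x'` and
`b_{x,x} = a_x`.
-/

open scoped ComplexOrder

open Finset

/-- A finite-outcome POVM: positive semidefinite operators summing to the identity. -/
def IsPOVM {X : Type*} [Fintype X] {n : ℕ} (A : X → Matrix (Fin n) (Fin n) ℂ) : Prop :=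
  (∀ x, (A x).PosSemidef) ∧ ∑ x, A x = 1

open scoped MatrixOrder
open Matrix

namespace Matrix

variable {𝕜 n : Type*} [RCLike 𝕜] [Fintype n] {A B : Matrix n n 𝕜}

theorem PosSemidef.mulVec_eq_zero_of_le (hB : B.PosSemidef) (hBA : B ≤ A) {v : n → 𝕜}
    (hv : A *ᵥ v = 0) : B *ᵥ v = 0 := by
  refine (hB.dotProduct_mulVec_zero_iff v).mp (le_antisymm ?_ (hB.dotProduct_mulVec_nonneg v))
  simpa [sub_mulVec, hv] using hBA.dotProduct_mulVec_nonneg v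

theorem IsHermitian.mem_range_mulVecLin_of_orthogonal_ker (hA : A.IsHermitian) {v : n → 𝕜}
    (hv : ∀ k, A *ᵥ k = 0 → star k ⬝ᵥ v = 0) : v ∈ LinearMap.range A.mulVecLin := by
  classical
  have hsymm := isSymmetric_toEuclideanLin_iff.mpr hA
  have hmem : WithLp.toLp 2 v ∈ (LinearMap.ker (toEuclideanLin A))ᗮ := by
    refine (Submodule.mem_orthogonal _ _).mpr fun k hk => ?_
    rw [EuclideanSpace.inner_eq_star_dotProduct, dotProduct_comm]
    exact hv _ (congrArg WithLp.ofLp hk)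
  rw [← hsymm.orthogonal_range, Submodule.orthogonal_orthogonal] at hmem
  obtain ⟨u, hu⟩ := hmem
  exact ⟨WithLp.ofLp u, congrArg WithLp.ofLp hu⟩

theorem PosSemidef.range_mulVecLin_le_of_le (hB : B.PosSemidef) (hBA : B ≤ A) :
    LinearMap.range B.mulVecLin ≤ LinearMap.range A.mulVecLin := by
  have hA : A.IsHermitian := by simpa using hB.1.add hBA.1
  rintro _ ⟨w, rfl⟩
  refine hA.mem_range_mulVecLin_of_orthogonal_ker fun k hk => ?_
  rw [mulVecLin_apply, dotProduct_mulVec, ← hB.1.eq, ← star_mulVec,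
    hB.mulVec_eq_zero_of_le hBA hk, star_zero, zero_dotProduct]

theorem PosSemidef.norm_star_dotProduct_mulVec_sq_le (hA : A.PosSemidef) (w u : n → 𝕜) :
    ‖star w ⬝ᵥ A *ᵥ u‖ ^ 2 ≤
      RCLike.re (star w ⬝ᵥ A *ᵥ w) * RCLike.re (star u ⬝ᵥ A *ᵥ u) := by
  let _ := A.toSeminormedAddCommGroup hA
  let _ := A.toInnerProductSpace hA
  have hinner : ∀ a b : n → 𝕜, inner 𝕜 a b = star a ⬝ᵥ A *ᵥ b := fun a b => dotProduct_comm _ _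
  have h := inner_mul_inner_self_le (𝕜 := 𝕜) w u
  rwa [norm_inner_symm u w, ← sq, hinner, hinner, hinner] at h

theorem star_dotProduct_vecMulVec_mulVec (v u : n → 𝕜) :
    star u ⬝ᵥ vecMulVec v (star v) *ᵥ u = ((‖star v ⬝ᵥ u‖ ^ 2 : ℝ) : 𝕜) := by
  rw [vecMulVec_mulVec, op_smul_eq_smul, dotProduct_smul, smul_eq_mul, star_dotProduct (v := u),
    RCLike.star_def, RCLike.mul_conj, RCLike.ofReal_pow]

theorem PosSemidef.smul_vecMulVec_mulVec_le (hA : A.PosSemidef) (w : n → 𝕜) {ε : ℝ}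
    (hε : 0 ≤ ε) (hεw : ε * RCLike.re (star w ⬝ᵥ A *ᵥ w) ≤ 1) :
    (ε : 𝕜) • vecMulVec (A *ᵥ w) (star (A *ᵥ w)) ≤ A := by
  have hC := (posSemidef_vecMulVec_self_star (A *ᵥ w)).smul
    (RCLike.ofReal_nonneg (K := 𝕜) |>.mpr hε)
  refine .of_dotProduct_mulVec_nonneg (hA.1.sub hC.1) fun u => ?_
  rw [sub_mulVec, dotProduct_sub, smul_mulVec, dotProduct_smul, star_dotProduct_vecMulVec_mulVec]
  have hq := hA.dotProduct_mulVec_nonneg u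
  have hcs := hA.norm_star_dotProduct_mulVec_sq_le w u
  have hw := hA.re_dotProduct_nonneg w
  rw [star_mulVec, hA.1.eq, ← dotProduct_mulVec, RCLike.nonneg_iff]
  rw [RCLike.nonneg_iff] at hq
  rw [smul_eq_mul, ← RCLike.ofReal_mul, map_sub, map_sub, RCLike.ofReal_re, RCLike.ofReal_im,
    hq.2, sub_zero]
  refine ⟨?_, rfl⟩
  -- `ε ‖w* A u‖² ≤ ε (w* A w) (u* A u) ≤ u* A u`
  nlinarith

theorem exists_posSemidef_ne_zero_le_of_inf_range_ne_bot {A A' : Matrix n n 𝕜}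
    (hA : A.PosSemidef) (hA' : A'.PosSemidef)
    (h : LinearMap.range A.mulVecLin ⊓ LinearMap.range A'.mulVecLin ≠ ⊥) :
    ∃ C : Matrix n n 𝕜, C.PosSemidef ∧ C ≠ 0 ∧ C ≤ A ∧ C ≤ A' := by
  obtain ⟨v, hv, hv0⟩ := Submodule.ne_bot_iff _ |>.mp h
  obtain ⟨⟨w, rfl⟩, w', hw'⟩ := Submodule.mem_inf.mp hv
  simp only [mulVecLin_apply] at hv0 hw'
  have hc := hA.re_dotProduct_nonneg w
  have hc' := hA'.re_dotProduct_nonneg w'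
  set ε := (1 + RCLike.re (star w ⬝ᵥ A *ᵥ w) + RCLike.re (star w' ⬝ᵥ A' *ᵥ w'))⁻¹
  have hε : 0 < ε := by positivity
  refine ⟨(ε : 𝕜) • vecMulVec (A *ᵥ w) (star (A *ᵥ w)),
    (posSemidef_vecMulVec_self_star _).smul (RCLike.ofReal_nonneg (K := 𝕜) |>.mpr hε.le),
    smul_ne_zero (RCLike.ofReal_ne_zero.mpr hε.ne') (by simpa using hv0),
    hA.smul_vecMulVec_mulVec_le w hε.le ?_, hw' ▸ hA'.smul_vecMulVec_mulVec_le w' hε.le ?_⟩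
  all_goals rw [inv_mul_le_iff₀ (by positivity)]; linarith

theorem PosSemidef.eq_zero_of_le_of_le_of_inf_range_eq_bot {C A A' : Matrix n n 𝕜}
    (hC : C.PosSemidef) (hCA : C ≤ A) (hCA' : C ≤ A')
    (h : LinearMap.range A.mulVecLin ⊓ LinearMap.range A'.mulVecLin = ⊥) : C = 0 := by
  classical
  have hrange : LinearMap.range C.mulVecLin = ⊥ :=
    eq_bot_iff.mpr <| h ▸
      le_inf (hC.range_mulVecLin_le_of_le hCA) (hC.range_mulVecLin_le_of_le hCA')
  exact toLin'.map_eq_zero_iff.mp (LinearMap.range_eq_bot.mp hrange)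

end Matrix

section JointPOVM

variable {X 𝕜 n : Type*} [RCLike 𝕜]

theorem diag_eq_of_inf_range_eq_bot [Fintype X] [Fintype n] {A : X → Matrix n n 𝕜}
    {B : X × X → Matrix n n 𝕜}
    (hB : ∀ p, (B p).PosSemidef) (hB₁ : ∀ x, ∑ x', B (x, x') = A x)
    (hB₂ : ∀ x', ∑ x, B (x, x') = A x')
    (hA : ∀ x x', x ≠ x' →
      LinearMap.range (A x).mulVecLin ⊓ LinearMap.range (A x').mulVecLin = ⊥) (x : X) :
    B (x, x) = A x := by
  have hoff : ∀ x', x' ≠ x → B (x, x') = 0 := fun x' hx' =>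
    (hB (x, x')).eq_zero_of_le_of_le_of_inf_range_eq_bot
      (hB₁ x ▸ single_le_sum (fun y _ => (hB (x, y)).nonneg) (mem_univ x'))
      (hB₂ x' ▸ single_le_sum (fun y _ => (hB (y, x')).nonneg) (mem_univ x))
      (hA x x' hx'.symm)
  rw [← hB₁ x, sum_eq_single x (fun x' _ hx' => hoff x' hx') (by simp)]

variable [DecidableEq X]

def signedPair (x x' : X) : X → ℤ := Pi.single x 1 - Pi.single x' 1

/-- The diagonal joint POVM `(y, y') ↦ δ_{y y'} A y` with the weight `C` moved from the cells
`(x, x)`, `(x', x')` to the cells `(x, x')`, `(x', x)`. -/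
def shiftedDiagCoupling (A : X → Matrix n n 𝕜) (x x' : X) (C : Matrix n n 𝕜) :
    X × X → Matrix n n 𝕜 :=
  fun p => (if p.1 = p.2 then A p.1 else 0) - (signedPair x x' p.1 * signedPair x x' p.2) • C

theorem shiftedDiagCoupling_posSemidef {A : X → Matrix n n 𝕜} {x x' : X} {C : Matrix n n 𝕜}
    (hA : ∀ y, (A y).PosSemidef) (hxx' : x ≠ x') (hC : C.PosSemidef) (hCx : C ≤ A x)
    (hCx' : C ≤ A x') (p : X × X) : (shiftedDiagCoupling A x x' C p).PosSemidef := by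
  obtain ⟨y, y'⟩ := p
  rw [le_iff] at hCx hCx'
  rcases eq_or_ne y y' with rfl | hyy'
  · by_cases hy : y = x <;> by_cases hy' : y = x' <;>
      simp_all [shiftedDiagCoupling, signedPair, Pi.single_apply, eq_comm]
  · by_cases hy : y = x <;> by_cases hy' : y = x' <;> by_cases hyx : y' = x <;>
      by_cases hyx' : y' = x' <;>
      simp_all [shiftedDiagCoupling, signedPair, Pi.single_apply, eq_comm, PosSemidef.zero]

variable [Fintype X]

theorem sum_signedPair (x x' : X) : ∑ y, signedPair x x' y = 0 := by
  simp [signedPair, sum_sub_distrib]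

theorem sum_signedPair_mul_self {x x' : X} (hxx' : x ≠ x') :
    ∑ y, signedPair x x' y * signedPair x x' y = 2 := by
  simp [signedPair, Pi.single_apply, mul_sub, sum_sub_distrib, hxx', hxx'.symm]

theorem sum_shiftedDiagCoupling_left (A : X → Matrix n n 𝕜) (x x' : X) (C : Matrix n n 𝕜)
    (y : X) : ∑ y', shiftedDiagCoupling A x x' C (y, y') = A y := by
  simp [shiftedDiagCoupling, sum_sub_distrib, ← sum_smul, ← mul_sum, sum_signedPair]

theorem sum_shiftedDiagCoupling_right (A : X → Matrix n n 𝕜) (x x' : X) (C : Matrix n n 𝕜)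
    (y' : X) : ∑ y, shiftedDiagCoupling A x x' C (y, y') = A y' := by
  simp [shiftedDiagCoupling, sum_sub_distrib, ← sum_smul, ← sum_mul, sum_signedPair]

theorem sum_shiftedDiagCoupling_diag (A : X → Matrix n n 𝕜) {x x' : X} (hxx' : x ≠ x')
    (C : Matrix n n 𝕜) :
    ∑ y, shiftedDiagCoupling A x x' C (y, y) = ∑ y, A y - (2 : 𝕜) • C := by
  simp [shiftedDiagCoupling, sum_sub_distrib, ← sum_smul, sum_signedPair_mul_self hxx',
    ofNat_smul_eq_nsmul]

end JointPOVM

theorem IsPOVM.of_sum_left {X : Type*} [Fintype X] {n : ℕ} {A : X → Matrix (Fin n) (Fin n) ℂ}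
    {B : X × X → Matrix (Fin n) (Fin n) ℂ} (hA : IsPOVM A) (hB : ∀ p, (B p).PosSemidef)
    (hB₁ : ∀ x, ∑ x', B (x, x') = A x) : IsPOVM B :=
  ⟨hB, by rw [Fintype.sum_prod_type, ← hA.2]; exact sum_congr rfl fun x _ => hB₁ x⟩

theorem povm_intersubjective_iff_supports {n : ℕ} {X : Type*} [Fintype X]
    (A : X → Matrix (Fin n) (Fin n) ℂ) (hA : IsPOVM A) :
    (∀ B : X × X → Matrix (Fin n) (Fin n) ℂ, IsPOVM B →
        (∀ x, ∑ x', B (x, x') = A x) → (∀ x', ∑ x, B (x, x') = A x') →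
        ∑ x, B (x, x) = 1) ↔
      (∀ x x', x ≠ x' →
        LinearMap.range (A x).mulVecLin ⊓ LinearMap.range (A x').mulVecLin = ⊥) := by
  classical
  refine ⟨fun hint x x' hxx' => ?_, fun hsupp B hB hB₁ hB₂ => ?_⟩
  · by_contra hne
    obtain ⟨C, hC, hC0, hCx, hCx'⟩ :=
      exists_posSemidef_ne_zero_le_of_inf_range_ne_bot (hA.1 x) (hA.1 x') hne
    have hdiag := hint (shiftedDiagCoupling A x x' C)
      (hA.of_sum_left (shiftedDiagCoupling_posSemidef hA.1 hxx' hC hCx hCx')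
        (sum_shiftedDiagCoupling_left A x x' C))
      (sum_shiftedDiagCoupling_left A x x' C) (sum_shiftedDiagCoupling_right A x x' C)
    rw [sum_shiftedDiagCoupling_diag A hxx', hA.2, sub_eq_self, smul_eq_zero] at hdiag
    exact hC0 (hdiag.resolve_left two_ne_zero)
  · rw [← hA.2]
    exact sum_congr rfl fun x _ => diag_eq_of_inf_range_eq_bot hB.1 hB₁ hB₂ hsupp x
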